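/- For a primitive polynomial Q in t variables of degree g and every prime p > g and integer ν ≥ 1, the number of solutions ξ ∈ (ℤ/p^νℤ)^t of Q(ξ) ≡ 0 (mod p^ν) is strictly less than p^(νt). -/

import Mathlib

/-!
Reduce modulo `p`. Primitivity makes `Q mod p` a nonzero polynomial of degree at most `g`, so by
Schwartz–Zippel it has at most `g p^(t-1)` zeros in `𝔽_p^t`. Reduction `(ℤ/p^ν)^t → 𝔽_p^t` is a
surjective additive map, so all its fibres have `p^((ν-1)t)` elements and every zero modulo `p^ν`
lies over a zero modulo `p`. Hence there are at most `g p^(νt-1)` zeros modulo `p^ν`, and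
`g < p` makes this less than `p^(νt)`.
-/

open Finset MvPolynomial

theorem card_mul_card_le_of_surjective_of_mapsTo {G M : Type*} [AddGroup G] [Fintype G]
    [AddGroup M] [Fintype M] [DecidableEq M] {f : G →+ M} (hf : Function.Surjective f)
    {s : Finset G} {t : Finset M} (hst : ∀ a ∈ s, f a ∈ t) :
    #s * Fintype.card M ≤ #t * Fintype.card G := by
  set n := #{g | f g = 0}
  have hfiber (y : M) : #{g | f g = y} = n :=
    AddMonoidHom.card_fiber_eq_of_mem_range f (hf y) (hf 0)
  have hG : Fintype.card G = Fintype.card M * n := by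
    rw [← card_univ, card_eq_sum_card_fiberwise (t := univ) (f := f) (fun _ _ ↦ mem_univ _)]
    simp [hfiber]
  have hs : #s ≤ n * #t := card_le_mul_card_image_of_maps_to hst n fun y _ ↦
    hfiber y ▸ card_le_card (filter_subset_filter _ (subset_univ s))
  rw [hG]
  calc #s * Fintype.card M ≤ n * #t * Fintype.card M := Nat.mul_le_mul_right _ hs
    _ = #t * (Fintype.card M * n) := by ring

theorem MvPolynomial.card_zeros_mul_le {R : Type*} [CommRing R] [IsDomain R] [Fintype R]
    [DecidableEq R] {n : ℕ} {P : MvPolynomial (Fin n) R} (hP : P ≠ 0) :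
    #{x : Fin n → R | eval x P = 0} * Fintype.card R ≤ P.totalDegree * Fintype.card R ^ n := by
  have h := schwartz_zippel_totalDegree hP univ
  rw [Fintype.piFinset_univ, card_univ] at h
  have hq : (0 : ℚ≥0) < Fintype.card R := by exact_mod_cast Fintype.card_pos
  rw [div_le_div_iff₀ (pow_pos hq n) hq] at h
  exact_mod_cast h

theorem MvPolynomial.map_intCastRingHom_ne_zero {σ : Type*} {Q : MvPolynomial σ ℤ}
    (hQ : ∀ d : ℤ, (∀ m, d ∣ Q.coeff m) → IsUnit d) {n : ℕ} (hn : n ≠ 1) :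
    map (Int.castRingHom (ZMod n)) Q ≠ 0 := by
  intro h
  have hdvd (m) : (n : ℤ) ∣ Q.coeff m := by
    rw [← ZMod.intCast_zmod_eq_zero_iff_dvd, ← eq_intCast (Int.castRingHom _), ← coeff_map, h,
      coeff_zero]
  rcases Int.isUnit_iff.mp (hQ n hdvd) with h1 | h1 <;> omega

theorem card_aeval_zeros_mul_le_of_surjective {σ R S : Type*} [Fintype σ] [DecidableEq σ]
    [CommRing R] [Fintype R] [DecidableEq R] [CommRing S] [Fintype S] [DecidableEq S]
    {f : R →+* S} (hf : Function.Surjective f) (Q : MvPolynomial σ ℤ) :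
    #{ξ : σ → R | aeval ξ Q = 0} * Fintype.card S ^ Fintype.card σ ≤
      #{x : σ → S | aeval x Q = 0} * Fintype.card R ^ Fintype.card σ := by
  simp only [← Fintype.card_fun]
  refine card_mul_card_le_of_surjective_of_mapsTo (f := f.toAddMonoidHom.compLeft σ)
    hf.comp_left fun ξ hξ ↦ ?_
  simp only [mem_filter, mem_univ, true_and] at hξ ⊢
  have h := comp_aeval_apply ξ f.toIntAlgHom Q
  rw [hξ, map_zero] at h
  exact h.symm

theorem le_mul_pow_pred_and_lt_pow_of_mul_le {N g p k : ℕ} (hgp : g < p)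
    (h : N * p ≤ g * p ^ k) : N ≤ g * p ^ (k - 1) ∧ N < p ^ k := by
  cases k with
  | zero =>
    rw [pow_zero, mul_one] at h
    have hp : 0 < p := by omega
    constructor <;> simp <;> nlinarith
  | succ k =>
    have hp : 0 < p := by omega
    have hN : N ≤ g * p ^ k :=
      Nat.le_of_mul_le_mul_right (by rwa [pow_succ, ← mul_assoc] at h) hp
    refine ⟨hN, hN.trans_lt ?_⟩
    rw [pow_succ']
    exact Nat.mul_lt_mul_of_pos_right hgp (pow_pos hp k)

theorem rho_lt_pow_of_prime_gt_deg_general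
    (t g : ℕ)
    (Q : MvPolynomial (Fin t) ℤ)
    (hdeg : Q.totalDegree = g)
    (hprim : ∀ d : ℤ, (∀ m, d ∣ Q.coeff m) → IsUnit d)
    (p : ℕ) (hp : p.Prime) (hpg : g < p) (ν : ℕ) (hν : 1 ≤ ν) :
    Nat.card {ξ : Fin t → ZMod (p ^ ν) // MvPolynomial.aeval ξ Q = 0} ≤ g * p ^ (ν * t - 1) ∧
      Nat.card {ξ : Fin t → ZMod (p ^ ν) // MvPolynomial.aeval ξ Q = 0} < p ^ (ν * t) := by
  have : Fact p.Prime := ⟨hp⟩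
  have hmodp : #{x : Fin t → ZMod p | aeval x Q = 0} * p ≤ g * p ^ t := by
    have h := card_zeros_mul_le (map_intCastRingHom_ne_zero hprim hp.one_lt.ne')
    simp only [eval_map, ← algebraMap_int_eq, ← aeval_def, ZMod.card] at h
    exact h.trans (Nat.mul_le_mul_right _ (hdeg ▸ Finset.sup_mono (support_map_subset _ _)))
  have hlift := card_aeval_zeros_mul_le_of_surjective
    (ZMod.castHom_surjective (dvd_pow_self p (by omega : ν ≠ 0))) Q
  rw [ZMod.card, ZMod.card, Fintype.card_fin, ← pow_mul] at hlift
  rw [Nat.card_eq_fintype_card, Fintype.card_subtype]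
  apply le_mul_pow_pred_and_lt_pow_of_mul_le hpg
  refine Nat.le_of_mul_le_mul_right (c := p ^ t) ?_ (pow_pos hp.pos t)
  calc #{ξ : Fin t → ZMod (p ^ ν) | aeval ξ Q = 0} * p * p ^ t
      = #{ξ : Fin t → ZMod (p ^ ν) | aeval ξ Q = 0} * p ^ t * p := by ring
    _ ≤ #{x : Fin t → ZMod p | aeval x Q = 0} * p ^ (ν * t) * p := Nat.mul_le_mul_right _ hlift
    _ = #{x : Fin t → ZMod p | aeval x Q = 0} * p * p ^ (ν * t) := by ring
    _ ≤ g * p ^ t * p ^ (ν * t) := Nat.mul_le_mul_right _ hmodp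
    _ = _ := by ring

/-- For a primitive polynomial `Q` of degree `g` in `t` variables and a prime `p > g`,
the number of zeros of `Q` modulo `p^ν` is at most `g * p^(νt-1)`, hence `< p^(νt)`. -/
theorem rho_lt_pow_of_prime_gt_deg
    (t g : ℕ) (ht : 1 ≤ t) (hg : 1 ≤ g)
    (Q : MvPolynomial (Fin t) ℤ)
    (hdeg : Q.totalDegree = g)
    (hprim : ∀ d : ℤ, (∀ m, d ∣ Q.coeff m) → IsUnit d)
    (p : ℕ) (hp : p.Prime) (hpg : g < p) (ν : ℕ) (hν : 1 ≤ ν) :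
    Nat.card {ξ : Fin t → ZMod (p ^ ν) // MvPolynomial.aeval ξ Q = 0} ≤ g * p ^ (ν * t - 1) ∧
      Nat.card {ξ : Fin t → ZMod (p ^ ν) // MvPolynomial.aeval ξ Q = 0} < p ^ (ν * t) :=
  rho_lt_pow_of_prime_gt_deg_general t g Q hdeg hprim p hp hpg ν hν
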